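/- arXiv:1901.09212 — 7 statements merged into one kernel-verified Lean document; each statement's English description precedes it below -/
import Mathlib

section
/- Let a be an integer, f : ℤ → ℝ, and R > 0 be such that for every r with 0 < r < R the series ∑_{k=1}^∞ r^{k-1} |f(k+a)| converges. Define the nabla Laplace transform F(s) = ∑_{k=1}^∞ (1-s)^{k-1} f(k+a) for complex s with |1-s| < R. Then for every integer m ≥ 1 and every r with 0 < r < R, one has f(a+m) = (1/(2π)) ∫_{-π}^{π} F(1 - r e^{-iθ}) (r e^{-iθ})^{1-m} dθ. (This is the inverse nabla Laplace transform formula, with the clockwise contour around the point 1 parameterized as s = 1 - r e^{-iθ}.) -/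
/-!
On the circle `s = 1 - r e^{-iθ}` the series for `F(s)` is dominated by `∑ rᵏ |f(a+k+1)|`,
so multiplying by `(r e^{-iθ})^{1-m}` and integrating term by term is legitimate. The `k`-th
term becomes a constant times `e^{-i(k-m+1)θ}`, whose integral over `[-π, π]` vanishes unless
`k = m - 1`; that surviving term is `2π f(a+m)`.
-/

open Complex MeasureTheory Real

theorem integral_exp_neg_I_mul_zpow (p : ℤ) :
    ∫ θ in (-π)..π, exp (-(I * θ)) ^ p = if p = 0 then (2 * π : ℂ) else 0 := by
  split_ifs with hp
  · simp [hp, two_mul]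
  have hc : (-(p : ℂ) * I) ≠ 0 := by simpa using hp
  simp_rw [← exp_int_mul, show ∀ θ : ℝ, (p : ℂ) * -(I * θ) = -(p : ℂ) * I * θ from
    fun θ => by ring]
  rw [integral_exp_mul_complex hc, div_eq_zero_iff, sub_eq_zero]
  left
  -- `exp (c π) = exp (-c π)` because `2 π p I` is a period of `exp`.
  exact exp_eq_exp_iff_exists_int.mpr ⟨-p, by push_cast; ring⟩

theorem integral_tsum_pow_mul_mul_zpow_neg {c : ℕ → ℂ} {r : ℝ} (hr : 0 < r)
    (hc : Summable fun k => r ^ k * ‖c k‖) (n : ℕ) :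
    ∫ θ in (-π)..π, (∑' k, (r * exp (-(I * θ))) ^ k * c k) * (r * exp (-(I * θ))) ^ (-(n : ℤ))
      = 2 * π * c n := by
  set z : ℝ → ℂ := fun θ => r * exp (-(I * θ))
  have hz : ∀ θ, z θ ≠ 0 := fun θ => mul_ne_zero (by exact_mod_cast hr.ne') (exp_ne_zero _)
  have hnorm : ∀ θ, ‖z θ‖ = r := fun θ => by
    simp [z, norm_exp, abs_of_pos hr]
  have hterm : ∀ k θ, z θ ^ k * c k * z θ ^ (-(n : ℤ))
      = c k * r ^ ((k : ℤ) - n) * exp (-(I * θ)) ^ ((k : ℤ) - n) := fun k θ => by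
    rw [mul_right_comm, ← zpow_natCast, ← zpow_add₀ (hz θ), mul_zpow, ← sub_eq_add_neg]
    ring
  have hseries : ∀ θ, Summable fun k => z θ ^ k * c k := fun θ =>
    hc.of_norm_bounded fun k => by simp [hnorm]
  have hsum := intervalIntegral.hasSum_integral_of_dominated_convergence
    (F := fun k θ => z θ ^ k * c k * z θ ^ (-(n : ℤ)))
    (f := fun θ => (∑' k, z θ ^ k * c k) * z θ ^ (-(n : ℤ)))
    (μ := volume) (a := -π) (b := π)
    (fun k _ => r ^ k * ‖c k‖ * r ^ (-(n : ℤ)))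
    (fun k => by fun_prop) (fun k => .of_forall fun θ _ => by simp [hnorm])
    (.of_forall fun _ _ => hc.mul_right _) intervalIntegrable_const
    (.of_forall fun θ _ => ((hseries θ).hasSum).mul_right _)
  have hcoeff : ∀ k, ∫ θ in (-π)..π, z θ ^ k * c k * z θ ^ (-(n : ℤ))
      = if k = n then 2 * π * c n else 0 := fun k => by
    simp_rw [hterm, intervalIntegral.integral_const_mul, integral_exp_neg_I_mul_zpow, sub_eq_zero,
      Nat.cast_inj]
    split_ifs with hk
    · subst hk
      simp only [sub_self, zpow_zero, mul_one]
      ring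
    · simp
  simp only [hcoeff] at hsum
  exact hsum.unique (hasSum_ite_eq n _)

theorem inverse_nabla_laplace_transform_general
    (a : ℤ) (f : ℤ → ℝ) (R : ℝ)
    (hconv : ∀ r : ℝ, 0 < r → r < R →
      Summable (fun k : ℕ => r ^ k * |f (a + (k : ℤ) + 1)|))
    (F : ℂ → ℂ)
    (hF : ∀ s : ℂ, ‖1 - s‖ < R →
      F s = ∑' k : ℕ, (1 - s) ^ k * (f (a + (k : ℤ) + 1) : ℂ))
    (m : ℤ) (hm : 1 ≤ m) (r : ℝ) (hr0 : 0 < r) (hrR : r < R) :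
    (f (a + m) : ℂ) =
      (1 / (2 * Real.pi)) *
        ∫ θ in (-Real.pi)..Real.pi,
          F (1 - (r : ℂ) * Complex.exp (-(Complex.I * (θ : ℂ)))) *
            ((r : ℂ) * Complex.exp (-(Complex.I * (θ : ℂ)))) ^ ((1 : ℤ) - m) := by
  obtain ⟨n, rfl⟩ : ∃ n : ℕ, m = n + 1 := ⟨(m - 1).toNat, by omega⟩
  have hseries : ∀ θ : ℝ, F (1 - r * exp (-(I * θ)))
      = ∑' k : ℕ, (r * exp (-(I * θ))) ^ k * (f (a + k + 1) : ℂ) := fun θ => by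
    rw [hF _ (by simpa [norm_exp, abs_of_pos hr0] using hrR), sub_sub_cancel]
  have hsummable : Summable fun k : ℕ => r ^ k * ‖(f (a + k + 1) : ℂ)‖ := by
    simpa only [norm_real, Real.norm_eq_abs] using hconv r hr0 hrR
  simp_rw [hseries, show (1 : ℤ) - (n + 1) = -n by ring,
    integral_tsum_pow_mul_mul_zpow_neg hr0 hsummable n, ← add_assoc]
  field_simp

/-- **Inverse nabla Laplace transform.**
If `F(s) = ∑_{k=1}^∞ (1-s)^{k-1} f(k+a)` (the nabla Laplace transform of `f` about the
initial instant `a`), defined for `|1-s| < R`, then for every integer `m ≥ 1` and every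
`0 < r < R`,
`f(a+m) = (1/(2π)) ∫_{-π}^{π} F(1 - r e^{-iθ}) (r e^{-iθ})^{1-m} dθ`. -/
theorem inverse_nabla_laplace_transform
    (a : ℤ) (f : ℤ → ℝ) (R : ℝ) (hR : 0 < R)
    (hconv : ∀ r : ℝ, 0 < r → r < R →
      Summable (fun k : ℕ => r ^ k * |f (a + (k : ℤ) + 1)|))
    (F : ℂ → ℂ)
    (hF : ∀ s : ℂ, ‖1 - s‖ < R →
      F s = ∑' k : ℕ, (1 - s) ^ k * (f (a + (k : ℤ) + 1) : ℂ))
    (m : ℤ) (hm : 1 ≤ m) (r : ℝ) (hr0 : 0 < r) (hrR : r < R) :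
    (f (a + m) : ℂ) =
      (1 / (2 * Real.pi)) *
        ∫ θ in (-Real.pi)..Real.pi,
          F (1 - (r : ℂ) * Complex.exp (-(Complex.I * (θ : ℂ)))) *
            ((r : ℂ) * Complex.exp (-(Complex.I * (θ : ℂ)))) ^ ((1 : ℤ) - m) :=
  inverse_nabla_laplace_transform_general a f R hconv F hF m hm r hr0 hrR
end

section
/- Let a be an integer, f : ℤ → ℝ, and R > 0 be such that for every r with 0 < r < R the series ∑_{k=1}^∞ r^{k-1} |f(k+a)| converges, and let F(s) = ∑_{k=1}^∞ (1-s)^{k-1} f(k+a) for |1-s| < R. Then for every integer κ ≥ 1, the function s ↦ (F(s) − ∑_{k=1}^{κ-1} (1-s)^{k-1} f(a+k)) / (1-s)^{κ-1} tends to f(a+κ) as the complex variable s tends to 1 with s ≠ 1. -/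
/-!
With `c k = f (a + k + 1)` and `z = 1 - s`, the quotient is the tail series `∑' k, z ^ k * c (k + κ - 1)`
once `z ≠ 0` is inside the disc of convergence. By the Weierstrass M-test this tail series is
continuous on a closed disc `‖z‖ ≤ r` with `0 < r < R`, so it tends to its constant term
`c (κ - 1) = f (a + κ)` as `z → 0`.
-/

open Filter Topology

section PowerSeries

variable {𝕜 : Type*} [NormedField 𝕜]

theorem summable_pow_mul_norm_nat_add {b : ℕ → 𝕜} {r : ℝ} (hr : r ≠ 0)
    (hb : Summable fun k => r ^ k * ‖b k‖) (m : ℕ) :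
    Summable fun k => r ^ k * ‖b (k + m)‖ := by
  refine (((summable_nat_add_iff m).2 hb).mul_left (r ^ m)⁻¹).congr fun k => ?_
  rw [pow_add]
  field_simp

theorem tsum_sub_sum_range_div_pow {b : ℕ → 𝕜} {z : 𝕜} (hz : z ≠ 0)
    (hs : Summable fun k => z ^ k * b k) (m : ℕ) :
    (∑' k, z ^ k * b k - ∑ k ∈ Finset.range m, z ^ k * b k) / z ^ m =
      ∑' k, z ^ k * b (k + m) := by
  rw [← hs.sum_add_tsum_nat_add m, add_sub_cancel_left, div_eq_iff (pow_ne_zero m hz),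
    ← tsum_mul_right]
  exact tsum_congr fun k => by ring

variable [CompleteSpace 𝕜]

theorem summable_pow_mul_of_norm_le {b : ℕ → 𝕜} {r : ℝ} (hb : Summable fun k => r ^ k * ‖b k‖)
    {z : 𝕜} (hz : ‖z‖ ≤ r) : Summable fun k => z ^ k * b k :=
  Summable.of_norm_bounded hb fun k => by
    rw [norm_mul, norm_pow]
    gcongr

theorem tendsto_tsum_pow_mul_nhds_zero {b : ℕ → 𝕜} {r : ℝ} (hr : 0 < r)
    (hb : Summable fun k => r ^ k * ‖b k‖) :
    Tendsto (fun z => ∑' k, z ^ k * b k) (𝓝 0) (𝓝 (b 0)) := by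
  have hcont : ContinuousOn (fun z => ∑' k, z ^ k * b k) (Metric.closedBall 0 r) :=
    continuousOn_tsum (fun k => by fun_prop) hb fun k z hz => by
      rw [norm_mul, norm_pow]
      gcongr
      simpa using hz
  have hb0 : ∑' k, (0 : 𝕜) ^ k * b k = b 0 := by
    rw [tsum_eq_single 0 fun k hk => by simp [hk]]
    simp
  exact hb0 ▸ (hcont.continuousAt (Metric.closedBall_mem_nhds 0 hr)).tendsto

end PowerSeries

/-- Recovering the values of `f` from its nabla Laplace transform
`F(s) = ∑_{k=1}^∞ (1-s)^{k-1} f(k+a)` (defined for `|1-s| < R`): for every integer `κ ≥ 1`,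
`(F(s) − ∑_{k=1}^{κ-1} (1-s)^{k-1} f(a+k)) / (1-s)^{κ-1} → f(a+κ)` as `s → 1`, `s ≠ 1`. -/
theorem nabla_laplace_value_recovery
    (a : ℤ) (f : ℤ → ℝ) (R : ℝ) (hR : 0 < R)
    (hconv : ∀ r : ℝ, 0 < r → r < R →
      Summable (fun k : ℕ => r ^ k * |f (a + (k : ℤ) + 1)|))
    (F : ℂ → ℂ)
    (hF : ∀ s : ℂ, ‖1 - s‖ < R →
      F s = ∑' k : ℕ, (1 - s) ^ k * (f (a + (k : ℤ) + 1) : ℂ))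
    (κ : ℕ) (hκ : 1 ≤ κ) :
    Filter.Tendsto
      (fun s : ℂ =>
        (F s - ∑ k ∈ Finset.range (κ - 1), (1 - s) ^ k * (f (a + (k : ℤ) + 1) : ℂ)) /
          (1 - s) ^ (κ - 1))
      (nhdsWithin 1 {(1 : ℂ)}ᶜ) (nhds ((f (a + (κ : ℤ)) : ℝ) : ℂ)) := by
  set c : ℕ → ℂ := fun k => (f (a + (k : ℤ) + 1) : ℂ)
  obtain ⟨r, hr, hrR⟩ : ∃ r, 0 < r ∧ r < R := ⟨R / 2, by positivity, by linarith⟩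
  have hc : Summable fun k => r ^ k * ‖c k‖ := by
    simpa [c, Complex.norm_real] using hconv r hr hrR
  have hz : Tendsto (fun s : ℂ => 1 - s) (𝓝[≠] 1) (𝓝 0) :=
    ((continuous_const.sub continuous_id).tendsto' 1 0 (sub_self 1)).mono_left nhdsWithin_le_nhds
  have htail := (tendsto_tsum_pow_mul_nhds_zero hr
    (summable_pow_mul_norm_nat_add hr.ne' hc (κ - 1))).comp hz
  have hcκ : c (0 + (κ - 1)) = f (a + κ) := by
    simp only [c]
    congr 2
    omega
  rw [← hcκ]
  refine htail.congr' ?_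
  filter_upwards [hz.eventually (Metric.ball_mem_nhds 0 hr), self_mem_nhdsWithin] with s hs hs1
  rw [dist_zero_right] at hs
  rw [Function.comp_apply, hF s (hs.trans hrR), tsum_sub_sum_range_div_pow
    (sub_ne_zero.2 (Ne.symm hs1)) (summable_pow_mul_of_norm_le hc hs.le)]
end

section
/- Let a be an integer and f, g : ℤ → ℝ be such that for some r > 0 the series ∑_{k=1}^∞ r^{k-1} |f(k+a)| and ∑_{k=1}^∞ r^{k-1} |g(k+a)| converge. If ∑_{k=1}^∞ (1-s)^{k-1} f(k+a) = ∑_{k=1}^∞ (1-s)^{k-1} g(k+a) for every complex s with |1-s| < r, then f(k) = g(k) for every integer k ≥ a+1. (Uniqueness of the nabla Laplace transform.) -/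
/-!
In the variable `z = 1 - s` both transforms are power series in `z` converging absolutely on
`|z| < r`. They agree on a neighbourhood of `0`, so by uniqueness of power-series expansions
their coefficients `f (a + n + 1)` and `g (a + n + 1)` coincide.
-/

open Filter Topology NNReal ENNReal FormalMultilinearSeries

section PowerSeries

variable {𝕜 : Type*} [NontriviallyNormedField 𝕜]

lemma FormalMultilinearSeries.le_radius_ofScalars_of_summable {c : ℕ → 𝕜} {r : ℝ≥0}
    (hc : Summable fun n => ‖c n‖ * r ^ n) : (r : ℝ≥0∞) ≤ (ofScalars 𝕜 c).radius :=
  le_radius_of_summable_norm _ <| by simpa only [ofScalars_norm] using hc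

variable [CompleteSpace 𝕜]

lemma hasFPowerSeriesAt_tsum_mul_pow {c : ℕ → 𝕜} {r : ℝ≥0} (hr : 0 < r)
    (hc : Summable fun n => ‖c n‖ * r ^ n) :
    HasFPowerSeriesAt (fun z => ∑' n, c n * z ^ n) (ofScalars 𝕜 c) 0 := by
  have hrad : 0 < (ofScalars 𝕜 c).radius :=
    (ENNReal.coe_pos.mpr hr).trans_le (le_radius_ofScalars_of_summable hc)
  convert ((ofScalars 𝕜 c).hasFPowerSeriesOnBall hrad).hasFPowerSeriesAt using 1
  exact funext fun z => (ofScalars_sum_eq c z).symm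

lemma eq_of_tsum_mul_pow_eventuallyEq {c d : ℕ → 𝕜} {r : ℝ≥0} (hr : 0 < r)
    (hc : Summable fun n => ‖c n‖ * r ^ n) (hd : Summable fun n => ‖d n‖ * r ^ n)
    (h : (fun z => ∑' n, c n * z ^ n) =ᶠ[𝓝 0] fun z => ∑' n, d n * z ^ n) : c = d :=
  ofScalars_series_injective 𝕜 𝕜 <|
    (hasFPowerSeriesAt_tsum_mul_pow hr hc).eq_formalMultilinearSeries_of_eventually
      (hasFPowerSeriesAt_tsum_mul_pow hr hd) h

end PowerSeries

/-- **Uniqueness of the nabla Laplace transform.**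
If the nabla Laplace transforms (about the initial instant `a`) of `f` and `g` agree on
`|1-s| < r`, then `f(k) = g(k)` for every integer `k ≥ a+1`. -/
theorem nabla_laplace_uniqueness
    (a : ℤ) (f g : ℤ → ℝ) (r : ℝ) (hr : 0 < r)
    (hf : Summable (fun k : ℕ => r ^ k * |f (a + (k : ℤ) + 1)|))
    (hg : Summable (fun k : ℕ => r ^ k * |g (a + (k : ℤ) + 1)|))
    (h : ∀ s : ℂ, ‖1 - s‖ < r →
      (∑' k : ℕ, (1 - s) ^ k * (f (a + (k : ℤ) + 1) : ℂ)) =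
        ∑' k : ℕ, (1 - s) ^ k * (g (a + (k : ℤ) + 1) : ℂ)) :
    ∀ k : ℤ, a + 1 ≤ k → f k = g k := by
  lift r to ℝ≥0 using hr.le
  have coeff_eq : (fun n : ℕ => (f (a + n + 1) : ℂ)) = fun n : ℕ => (g (a + n + 1) : ℂ) := by
    refine eq_of_tsum_mul_pow_eventuallyEq hr
      (hf.congr fun n => by simp [mul_comm]) (hg.congr fun n => by simp [mul_comm]) ?_
    filter_upwards [Metric.ball_mem_nhds 0 hr] with z hz
    simpa [mul_comm] using h (1 - z) (by simpa using hz)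
  intro k hk
  obtain ⟨n, rfl⟩ : ∃ n : ℕ, k = a + n + 1 := ⟨(k - a - 1).toNat, by omega⟩
  exact_mod_cast congrFun coeff_eq n
end

section
/- Let a be an integer, α a real number with 0 < α < 1, and u : ℤ → ℝ. For each ω > 0 let z(ω, ·) : ℤ → ℝ satisfy z(ω, a) = 0 and z(ω, k) − z(ω, k−1) = −ω z(ω, k) + u(k) for every integer k ≥ a+1. Then for every integer k ≥ a+1, the function ω ↦ μ_α(ω) z(ω, k) is integrable on (0, +∞) and ∫_0^{+∞} μ_α(ω) z(ω, k) dω = {}_a∇_k^{-α} u(k). (Equivalence of the fractional sum with the output-form unilateral frequency distributed model.) -/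
/-!
Solving the recurrence gives `z(ω, k) = ∑_{i < k-a} u(k-i) / (1+ω)^(i+1)`, so everything reduces
to integrating `μ_α` against `(1+ω)^-(i+1)`. The substitution `ω = y / (1-y)` turns
`∫_0^∞ ω^-α (1+ω)^-(i+1) dω` into the Beta integral `B(1-α, α+i)`, and Euler's reflection formula
`Γ(α) Γ(1-α) = π / sin(απ)` turns `sin(απ)/π · B(1-α, α+i)` into `Γ(α+i) / (Γ(α) Γ(i+1))`.
-/

/-- The `α`-th nabla fractional sum of `u : ℤ → ℝ` with initial instant `a`:
`{}_a∇_k^{-α} u(k) = ∑_{i=0}^{k-a-1} (Γ(α+i)/(Γ(α) Γ(i+1))) u(k−i)`. -/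
noncomputable def nablaFracSum (a : ℤ) (α : ℝ) (u : ℤ → ℝ) (k : ℤ) : ℝ :=
  ∑ i ∈ Finset.range (k - a).toNat,
    Real.Gamma (α + i) / (Real.Gamma α * Real.Gamma (i + 1)) * u (k - i)

open MeasureTheory Set Real

lemma lintegral_rpow_mul_one_sub_rpow {p q : ℝ} (hp : 0 < p) (hq : 0 < q) :
    ∫⁻ y in Ioo 0 1, ENNReal.ofReal (y ^ (p - 1) * (1 - y) ^ (q - 1)) =
      ENNReal.ofReal (ProbabilityTheory.beta p q) := by
  have hB := ProbabilityTheory.beta_pos hp hq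
  have h := ProbabilityTheory.lintegral_betaPDF_eq_one hp hq
  rw [ProbabilityTheory.lintegral_betaPDF] at h
  simp_rw [mul_assoc, ENNReal.ofReal_mul (one_div_pos.2 hB).le] at h
  rw [lintegral_const_mul' _ _ ENNReal.ofReal_ne_top, mul_comm] at h
  rw [ENNReal.eq_inv_of_mul_eq_one_left h, one_div, ENNReal.ofReal_inv_of_pos hB, inv_inv]

lemma rpow_mul_one_sub_rpow_nonneg_ae (p q : ℝ) :
    0 ≤ᵐ[volume.restrict (Ioo 0 1)] fun y : ℝ => y ^ (p - 1) * (1 - y) ^ (q - 1) :=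
  ae_restrict_of_forall_mem measurableSet_Ioo fun _ hy =>
    mul_nonneg (rpow_nonneg hy.1.le _) (rpow_nonneg (sub_pos.2 hy.2).le _)

lemma integrableOn_rpow_mul_one_sub_rpow {p q : ℝ} (hp : 0 < p) (hq : 0 < q) :
    IntegrableOn (fun y : ℝ => y ^ (p - 1) * (1 - y) ^ (q - 1)) (Ioo 0 1) := by
  refine (lintegral_ofReal_ne_top_iff_integrable (by fun_prop)
    (rpow_mul_one_sub_rpow_nonneg_ae p q)).1 ?_
  rw [lintegral_rpow_mul_one_sub_rpow hp hq]
  exact ENNReal.ofReal_ne_top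

lemma integral_rpow_mul_one_sub_rpow {p q : ℝ} (hp : 0 < p) (hq : 0 < q) :
    ∫ y in Ioo 0 1, y ^ (p - 1) * (1 - y) ^ (q - 1) = ProbabilityTheory.beta p q := by
  rw [integral_eq_lintegral_of_nonneg_ae (rpow_mul_one_sub_rpow_nonneg_ae p q) (by fun_prop),
    lintegral_rpow_mul_one_sub_rpow hp hq,
    ENNReal.toReal_ofReal (ProbabilityTheory.beta_pos hp hq).le]

lemma image_div_one_sub_Ioo : (fun y : ℝ => y / (1 - y)) '' Ioo 0 1 = Ioi 0 := by
  ext ω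
  constructor
  · rintro ⟨y, ⟨hy0, hy1⟩, rfl⟩
    exact div_pos hy0 (sub_pos.2 hy1)
  · intro (hω : 0 < ω)
    refine ⟨ω / (1 + ω), ⟨by positivity, (div_lt_one (by positivity)).2 (by linarith)⟩, ?_⟩
    field_simp
    ring

lemma injOn_div_one_sub_Ioo : InjOn (fun y : ℝ => y / (1 - y)) (Ioo 0 1) := by
  intro y₁ hy₁ y₂ hy₂ h
  have h₁ : 1 - y₁ ≠ 0 := (sub_pos.2 hy₁.2).ne'
  have h₂ : 1 - y₂ ≠ 0 := (sub_pos.2 hy₂.2).ne'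
  field_simp at h
  linarith

lemma hasDerivAt_div_one_sub {y : ℝ} (hy : y ≠ 1) :
    HasDerivAt (fun y : ℝ => y / (1 - y)) (((1 - y) ^ 2)⁻¹) y := by
  have h : 1 - y ≠ 0 := sub_ne_zero.2 hy.symm
  have h' : HasDerivAt (fun y : ℝ => y / (1 - y)) ((1 * (1 - y) - y * -1) / (1 - y) ^ 2) y :=
    (hasDerivAt_id y).div ((hasDerivAt_id y).const_sub 1) h
  convert h' using 1
  field_simp
  ring

section ChangeOfVariables

variable {E : Type*} [NormedAddCommGroup E] [NormedSpace ℝ E]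

lemma integrableOn_Ioi_iff_comp_div_one_sub (g : ℝ → E) :
    IntegrableOn g (Ioi 0) ↔
      IntegrableOn (fun y : ℝ => ((1 - y) ^ 2)⁻¹ • g (y / (1 - y))) (Ioo 0 1) := by
  rw [← image_div_one_sub_Ioo, integrableOn_image_iff_integrableOn_abs_deriv_smul measurableSet_Ioo
    (fun y hy => (hasDerivAt_div_one_sub hy.2.ne).hasDerivWithinAt) injOn_div_one_sub_Ioo]
  simp only [abs_inv, abs_sq]

lemma integral_Ioi_eq_integral_comp_div_one_sub (g : ℝ → E) :
    ∫ ω in Ioi 0, g ω = ∫ y in Ioo 0 1, ((1 - y) ^ 2)⁻¹ • g (y / (1 - y)) := by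
  rw [← image_div_one_sub_Ioo, integral_image_eq_integral_abs_deriv_smul measurableSet_Ioo
    (fun y hy => (hasDerivAt_div_one_sub hy.2.ne).hasDerivWithinAt) injOn_div_one_sub_Ioo]
  simp only [abs_inv, abs_sq]

end ChangeOfVariables

lemma inv_sq_one_sub_smul_rpow_div_one_add_rpow {p q y : ℝ} (hy : y ∈ Ioo 0 1) :
    ((1 - y) ^ 2)⁻¹ • ((y / (1 - y)) ^ (p - 1) / (1 + y / (1 - y)) ^ (p + q)) =
      y ^ (p - 1) * (1 - y) ^ (q - 1) := by
  have ht : 0 < 1 - y := sub_pos.2 hy.2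
  have hsplit : (1 - y) ^ (p + q) = (1 - y) ^ 2 * (1 - y) ^ (p - 1) * (1 - y) ^ (q - 1) := by
    rw [← rpow_two, ← rpow_add ht, ← rpow_add ht]
    ring_nf
  have hadd : 1 + y / (1 - y) = (1 - y)⁻¹ := by
    field_simp
    ring
  rw [smul_eq_mul, hadd, inv_rpow ht.le, div_rpow hy.1.le ht.le, hsplit]
  field_simp

lemma integrableOn_rpow_div_one_add_rpow {p q : ℝ} (hp : 0 < p) (hq : 0 < q) :
    IntegrableOn (fun ω : ℝ => ω ^ (p - 1) / (1 + ω) ^ (p + q)) (Ioi 0) := by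
  rw [integrableOn_Ioi_iff_comp_div_one_sub]
  exact (integrableOn_rpow_mul_one_sub_rpow hp hq).congr_fun
    (fun y hy => (inv_sq_one_sub_smul_rpow_div_one_add_rpow hy).symm) measurableSet_Ioo

lemma integral_rpow_div_one_add_rpow {p q : ℝ} (hp : 0 < p) (hq : 0 < q) :
    ∫ ω in Ioi 0, ω ^ (p - 1) / (1 + ω) ^ (p + q) = ProbabilityTheory.beta p q := by
  rw [integral_Ioi_eq_integral_comp_div_one_sub,
    setIntegral_congr_fun measurableSet_Ioo fun y hy =>
      inv_sq_one_sub_smul_rpow_div_one_add_rpow hy,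
    integral_rpow_mul_one_sub_rpow hp hq]

lemma eq_sum_div_pow_of_mul_eq_add {K : Type*} [Field K] {a : ℤ} {c : K} (hc : c ≠ 0)
    {u y : ℤ → K} (h0 : y a = 0) (hy : ∀ k, a + 1 ≤ k → c * y k = y (k - 1) + u k)
    {k : ℤ} (hk : a ≤ k) :
    y k = ∑ i ∈ Finset.range (k - a).toNat, u (k - i) / c ^ (i + 1) := by
  induction k, hk using Int.leInduction with
  | base => simp [h0]
  | succ k hk ih =>
    have hstep : y (k + 1) = (y k + u (k + 1)) / c := by
      rw [eq_div_iff hc, mul_comm, hy (k + 1) (by omega), add_sub_cancel_right]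
    rw [hstep, ih, show (k + 1 - a).toNat = (k - a).toNat + 1 by omega,
      Finset.sum_range_succ', add_div, Finset.sum_div]
    congr 1
    · refine Finset.sum_congr rfl fun i _ => ?_
      rw [pow_succ, div_div]
      push_cast
      ring_nf
    · simp

lemma sin_mul_pi_div_pi_mul_Gamma_one_sub {α : ℝ} (hα : sin (α * π) ≠ 0) :
    sin (α * π) / π * Gamma (1 - α) = (Gamma α)⁻¹ := by
  have h := Gamma_mul_Gamma_one_sub α
  rw [mul_comm π α] at h
  have hΓ : Gamma α ≠ 0 := by
    intro h'
    rw [h', zero_mul, eq_comm, div_eq_zero_iff] at h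
    exact h.elim pi_ne_zero hα
  rw [eq_div_iff hα] at h
  field_simp
  linear_combination h

noncomputable def frequencyWeight (α ω : ℝ) : ℝ := sin (α * π) / (π * ω ^ α)

lemma frequencyWeight_div_one_add_pow_eqOn (α : ℝ) (n : ℕ) :
    EqOn (fun ω => frequencyWeight α ω / (1 + ω) ^ (n + 1))
      (fun ω => sin (α * π) / π * (ω ^ ((1 - α) - 1) / (1 + ω) ^ ((1 - α) + (α + n))))
      (Ioi 0) := by
  intro ω (hω : 0 < ω)
  have hexp : (1 - α) + (α + n) = ((n + 1 : ℕ) : ℝ) := by push_cast; ring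
  simp only [frequencyWeight, hexp, rpow_natCast, sub_sub_cancel_left, rpow_neg hω.le]
  field_simp

lemma integrableOn_frequencyWeight_div_one_add_pow {α : ℝ} (hα0 : 0 < α) (hα1 : α < 1)
    (n : ℕ) : IntegrableOn (fun ω => frequencyWeight α ω / (1 + ω) ^ (n + 1)) (Ioi 0) :=
  IntegrableOn.congr_fun
    ((integrableOn_rpow_div_one_add_rpow (sub_pos.2 hα1) (by positivity)).const_mul _)
    (frequencyWeight_div_one_add_pow_eqOn α n).symm measurableSet_Ioi

lemma integral_frequencyWeight_div_one_add_pow {α : ℝ} (hα0 : 0 < α) (hα1 : α < 1) (n : ℕ) :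
    ∫ ω in Ioi 0, frequencyWeight α ω / (1 + ω) ^ (n + 1) =
      Gamma (α + n) / (Gamma α * Gamma (n + 1)) := by
  have hsin : sin (α * π) ≠ 0 :=
    (sin_pos_of_pos_of_lt_pi (by positivity) (by nlinarith [pi_pos])).ne'
  rw [setIntegral_congr_fun measurableSet_Ioi (frequencyWeight_div_one_add_pow_eqOn α n),
    integral_const_mul, integral_rpow_div_one_add_rpow (sub_pos.2 hα1) (by positivity),
    ProbabilityTheory.beta, show (1 - α) + (α + n) = (n : ℝ) + 1 by ring, ← mul_div_assoc,
    ← mul_assoc, sin_mul_pi_div_pi_mul_Gamma_one_sub hsin]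
  field_simp

/-- **Output-form unilateral frequency distributed model.**
If for each `ω > 0`, `z(ω,·)` satisfies `z(ω,a) = 0` and
`z(ω,k) − z(ω,k−1) = −ω z(ω,k) + u(k)` for `k ≥ a+1`, then for every `k ≥ a+1` the function
`ω ↦ μ_α(ω) z(ω,k)` is integrable on `(0,∞)` and
`∫_0^∞ μ_α(ω) z(ω,k) dω = {}_a∇_k^{-α} u(k)`, where `μ_α(ω) = sin(απ)/(π ω^α)`. -/
theorem output_form_frequency_distributed_model
    (a : ℤ) (α : ℝ) (hα0 : 0 < α) (hα1 : α < 1) (u : ℤ → ℝ)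
    (z : ℝ → ℤ → ℝ)
    (hz0 : ∀ ω : ℝ, 0 < ω → z ω a = 0)
    (hz : ∀ ω : ℝ, 0 < ω → ∀ k : ℤ, a + 1 ≤ k →
      z ω k - z ω (k - 1) = -ω * z ω k + u k) :
    ∀ k : ℤ, a + 1 ≤ k →
      MeasureTheory.IntegrableOn
        (fun ω : ℝ => Real.sin (α * Real.pi) / (Real.pi * ω ^ α) * z ω k)
        (Set.Ioi (0 : ℝ)) ∧
      (∫ ω in Set.Ioi (0 : ℝ),
          Real.sin (α * Real.pi) / (Real.pi * ω ^ α) * z ω k) =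
        nablaFracSum a α u k := by
  intro k hk
  have hz_sum : ∀ ω ∈ Ioi (0 : ℝ),
      z ω k = ∑ i ∈ Finset.range (k - a).toNat, u (k - i) / (1 + ω) ^ (i + 1) :=
    fun ω (hω : 0 < ω) => eq_sum_div_pow_of_mul_eq_add (by positivity) (hz0 ω hω)
      (fun j hj => by linarith [hz ω hω j hj]) (by omega)
  have hEqOn : EqOn (fun ω => sin (α * π) / (π * ω ^ α) * z ω k)
      (fun ω => ∑ i ∈ Finset.range (k - a).toNat,
        u (k - i) * (frequencyWeight α ω / (1 + ω) ^ (i + 1))) (Ioi 0) := by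
    intro ω hω
    simp only [hz_sum ω hω, Finset.mul_sum, frequencyWeight]
    exact Finset.sum_congr rfl fun i _ => by ring
  have hint : ∀ i : ℕ, IntegrableOn
      (fun ω => u (k - i) * (frequencyWeight α ω / (1 + ω) ^ (i + 1))) (Ioi 0) :=
    fun i => (integrableOn_frequencyWeight_div_one_add_pow hα0 hα1 i).const_mul _
  refine ⟨IntegrableOn.congr_fun (integrable_finsetSum _ fun i _ => hint i) hEqOn.symm
    measurableSet_Ioi, ?_⟩
  rw [setIntegral_congr_fun measurableSet_Ioi hEqOn, integral_finsetSum _ fun i _ => hint i,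
    nablaFracSum]
  refine Finset.sum_congr rfl fun i _ => ?_
  rw [integral_const_mul, integral_frequencyWeight_div_one_add_pow hα0 hα1, mul_comm]
end

section
/- For every real α with 0 < α < 1 and every complex number s not lying in the closed negative real half-line (-∞, 0], the bilateral identity 1/s^α = 2 ∫_0^{+∞} ω μ_α(ω²)/(s+ω²) dω holds, where s^α denotes the principal branch of the complex power. (This is the identity underlying the bilateral frequency distributed models, obtained from the unilateral one by the substitution ω ↦ ω².) -/
/-!
Substituting `t = ω²` turns the right-hand side into `sin (απ) / π` times the Mellin transform
at `1 - α` of `t ↦ (s + t)⁻¹`. At `s = 1` the substitution `t = x / (1 - x)` turns this Mellin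
transform into the Beta integral `B(1 - α, α) = Γ(1 - α) Γ(α) = π / sin (πα)`, and rescaling
`t` gives `r ^ (-α) π / sin (πα)` at every `s = r > 0`. On the slit plane both
`s ↦ ∫ t ^ (-α) / (s + t)` (differentiation under the integral sign, dominated thanks to
`‖s + t‖ ≥ c (1 + t)` locally uniformly in `s`) and `s ↦ s ^ (-α)` are holomorphic, so the
identity theorem extends the formula from the positive reals to the whole slit plane.
-/

open MeasureTheory Set Filter Topology Metric Complex
open scoped Real

theorem norm_one_add_ofReal {t : ℝ} (ht : 0 ≤ t) : ‖1 + (t : ℂ)‖ = 1 + t := by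
  rw [← ofReal_one, ← ofReal_add, norm_real, Real.norm_of_nonneg (by linarith)]

theorem exists_mul_one_add_le_norm_add_ofReal {s : ℂ} (hs : s ∈ slitPlane) :
    ∃ c > 0, ∀ t : ℝ, 0 ≤ t → c * (1 + t) ≤ ‖s + t‖ := by
  set δ := infDist s slitPlaneᶜ
  have hδ : 0 < δ :=
    (isOpen_slitPlane.isClosed_compl.notMem_iff_infDist_pos ⟨0, zero_notMem_slitPlane⟩).1
      (notMem_compl_iff.2 hs)
  refine ⟨δ / (δ + ‖s‖ + 1), by positivity, fun t ht => ?_⟩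
  have h_dist : δ ≤ ‖s + t‖ := by
    simpa [dist_eq_norm] using infDist_le_dist_of_mem (x := s)
      (mem_compl (neg_ofReal_mem_slitPlane.not.2 (not_lt.2 ht)))
  have h_far : t - ‖s‖ ≤ ‖s + t‖ := by
    have := norm_add_le (s + t) (-s)
    rw [add_neg_cancel_comm, norm_real, Real.norm_of_nonneg ht, norm_neg] at this
    linarith
  rw [div_mul_eq_mul_div, div_le_iff₀ (by positivity)]
  nlinarith [mul_nonneg (sub_nonneg.2 h_dist) (by positivity : (0 : ℝ) ≤ ‖s‖ + 1),
    mul_nonneg (sub_nonneg.2 h_far) hδ.le]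

theorem exists_ball_mul_one_add_le_norm_add_ofReal {s₀ : ℂ} (hs₀ : s₀ ∈ slitPlane) :
    ∃ c > 0, ∀ s ∈ ball s₀ c, ∀ t : ℝ, 0 ≤ t → c * (1 + t) ≤ ‖s + t‖ := by
  obtain ⟨c, hc, hbound⟩ := exists_mul_one_add_le_norm_add_ofReal hs₀
  refine ⟨c / 2, by positivity, fun s hs t ht => ?_⟩
  have h_near : ‖s₀ + t‖ - ‖s + t‖ < c / 2 := by
    calc ‖s₀ + t‖ - ‖s + t‖ ≤ ‖s₀ + t - (s + t)‖ := norm_sub_norm_le _ _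
      _ = dist s s₀ := by rw [dist_comm, dist_eq_norm]; ring_nf
      _ < c / 2 := hs
  nlinarith [hbound t ht]

section DominatingBounds

variable {c : ℝ} {s : ℂ} {t : ℝ}

theorem norm_inv_add_ofReal_le (hc : 0 < c) (ht : 0 ≤ t) (h : c * (1 + t) ≤ ‖s + t‖) :
    ‖(s + t)⁻¹‖ ≤ c⁻¹ * ‖(1 + (t : ℂ))⁻¹‖ := by
  rw [norm_inv, norm_inv, norm_one_add_ofReal ht, ← mul_inv]
  exact inv_anti₀ (by positivity) h

theorem norm_inv_add_ofReal_sq_le (hc : 0 < c) (ht : 0 ≤ t) (h : c * (1 + t) ≤ ‖s + t‖) :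
    ‖((s + t) ^ 2)⁻¹‖ ≤ c⁻¹ ^ 2 * ‖(1 + (t : ℂ))⁻¹‖ := by
  have h_one : ‖(1 + (t : ℂ))⁻¹‖ ≤ 1 := by
    rw [norm_inv, norm_one_add_ofReal ht]
    exact inv_le_one_of_one_le₀ (by linarith)
  calc ‖((s + t) ^ 2)⁻¹‖ = ‖(s + t)⁻¹‖ ^ 2 := by rw [norm_inv, norm_inv, norm_pow, inv_pow]
    _ ≤ (c⁻¹ * ‖(1 + (t : ℂ))⁻¹‖) ^ 2 := by gcongr; exact norm_inv_add_ofReal_le hc ht h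
    _ ≤ c⁻¹ ^ 2 * ‖(1 + (t : ℂ))⁻¹‖ := by
      rw [mul_pow]; gcongr; nlinarith [norm_nonneg (1 + (t : ℂ))⁻¹]

end DominatingBounds

theorem mellinConvergent_inv_one_add {σ : ℂ} (hσ₀ : 0 < σ.re) (hσ₁ : σ.re < 1) :
    MellinConvergent (fun t : ℝ => (1 + (t : ℂ))⁻¹) σ := by
  have h_norm : ∀ t : ℝ, 0 ≤ t → ‖(1 + (t : ℂ))⁻¹‖ = (1 + t)⁻¹ := fun t ht => by
    rw [norm_inv, norm_one_add_ofReal ht]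
  refine mellinConvergent_of_isBigO_rpow (a := 1) (b := 0) ?_ ?_ hσ₁ ?_ hσ₀
  · refine ContinuousOn.locallyIntegrableOn (fun t (ht : 0 < t) => ?_) measurableSet_Ioi
    have h_ne : 1 + (t : ℂ) ≠ 0 :=
      norm_pos_iff.1 (by rw [norm_one_add_ofReal ht.le]; positivity)
    exact ((by fun_prop : Continuous fun t : ℝ => 1 + (t : ℂ)).continuousAt.inv₀ h_ne)
      |>.continuousWithinAt
  · refine Asymptotics.IsBigO.of_bound 1 ?_
    filter_upwards [eventually_gt_atTop 0] with t ht
    rw [h_norm t ht.le, Real.rpow_neg_one, one_mul, Real.norm_of_nonneg (by positivity)]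
    exact inv_anti₀ ht (by linarith)
  · refine Asymptotics.IsBigO.of_bound 1 ?_
    filter_upwards [self_mem_nhdsWithin] with t (ht : 0 < t)
    rw [h_norm t ht.le, neg_zero, Real.rpow_zero, norm_one, one_mul]
    exact inv_le_one_of_one_le₀ (by linarith)

theorem differentiableAt_mellin_inv_add {σ : ℂ}
    (hσ : MellinConvergent (fun t : ℝ => (1 + (t : ℂ))⁻¹) σ) {s₀ : ℂ} (hs₀ : s₀ ∈ slitPlane) :
    DifferentiableAt ℂ (fun s : ℂ => mellin (fun t : ℝ => (s + t)⁻¹) σ) s₀ := by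
  obtain ⟨c, hc, hbound⟩ := exists_ball_mul_one_add_le_norm_add_ofReal hs₀
  have h_ne : ∀ s ∈ ball s₀ c, ∀ t : ℝ, 0 < t → s + t ≠ 0 := fun s hs t ht =>
    norm_pos_iff.1 ((by positivity : 0 < c * (1 + t)).trans_le (hbound s hs t ht.le))
  have h_int : Integrable (fun t : ℝ => ‖(t : ℂ) ^ (σ - 1) * (1 + (t : ℂ))⁻¹‖)
      (volume.restrict (Ioi 0)) := Integrable.norm hσ
  let F' : ℂ → ℝ → ℂ := fun s t => (t : ℂ) ^ (σ - 1) * (-1 / (s + t) ^ 2)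
  refine (hasDerivAt_integral_of_dominated_loc_of_deriv_le (F' := F')
    (bound := fun t : ℝ => c⁻¹ ^ 2 * ‖(t : ℂ) ^ (σ - 1) * (1 + (t : ℂ))⁻¹‖)
    (ball_mem_nhds s₀ hc) ?_ ?_ ?_ ?_ (h_int.const_mul _) ?_).2.differentiableAt
  · exact .of_forall fun s => by fun_prop
  · refine h_int.const_mul c⁻¹ |>.mono' (by fun_prop) ?_
    refine (ae_restrict_iff' measurableSet_Ioi).2 (.of_forall fun t (ht : 0 < t) => ?_)
    rw [smul_eq_mul, norm_mul, norm_mul, mul_left_comm]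
    gcongr
    exact norm_inv_add_ofReal_le hc ht.le (hbound s₀ (mem_ball_self hc) t ht.le)
  · fun_prop
  · refine (ae_restrict_iff' measurableSet_Ioi).2 (.of_forall fun t (ht : 0 < t) s hs => ?_)
    rw [norm_mul, norm_mul, neg_div, norm_neg, one_div, mul_left_comm]
    gcongr
    exact norm_inv_add_ofReal_sq_le hc ht.le (hbound s hs t ht.le)
  · refine (ae_restrict_iff' measurableSet_Ioi).2 (.of_forall fun t ht s hs => ?_)
    have := (((hasDerivAt_id s).add_const (t : ℂ)).inv (h_ne s hs t ht)).const_mul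
      ((t : ℂ) ^ (σ - 1))
    simpa [F'] using this

theorem integral_Ioi_eq_integral_Ioo_div_one_sub {E : Type*} [NormedAddCommGroup E]
    [NormedSpace ℝ E] (g : ℝ → E) :
    ∫ t in Ioi 0, g t = ∫ x in Ioo 0 1, ((1 - x) ^ 2)⁻¹ • g (x / (1 - x)) := by
  have h_image : (fun x : ℝ => x / (1 - x)) '' Ioo 0 1 = Ioi 0 := by
    ext t
    constructor
    · rintro ⟨x, ⟨hx₀, hx₁⟩, rfl⟩
      exact div_pos hx₀ (by linarith)
    · intro (ht : 0 < t)
      refine ⟨t / (1 + t), ⟨by positivity, (div_lt_one (by positivity)).2 (by linarith)⟩, ?_⟩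
      field_simp
      ring
  have h_deriv : ∀ x ∈ Ioo (0 : ℝ) 1,
      HasDerivWithinAt (fun x : ℝ => x / (1 - x)) ((1 - x) ^ 2)⁻¹ (Ioo 0 1) x := by
    intro x ⟨_, hx₁⟩
    have h := (hasDerivAt_id x).div ((hasDerivAt_id x).const_sub 1) (by simp; linarith)
    refine (h.congr_deriv ?_).hasDerivWithinAt
    simp only [id]
    ring
  have h_inj : InjOn (fun x : ℝ => x / (1 - x)) (Ioo 0 1) := by
    intro a ⟨_, ha₁⟩ b ⟨_, hb₁⟩ h
    have ha : 1 - a ≠ 0 := by linarith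
    have hb : 1 - b ≠ 0 := by linarith
    field_simp at h
    linarith
  rw [← h_image, integral_image_eq_integral_abs_deriv_smul measurableSet_Ioo h_deriv h_inj]
  exact setIntegral_congr_fun measurableSet_Ioo fun x _ => by rw [abs_of_nonneg (by positivity)]

theorem mellin_inv_one_add {σ : ℂ} (hσ₀ : 0 < σ.re) (hσ₁ : σ.re < 1) :
    mellin (fun t : ℝ => (1 + (t : ℂ))⁻¹) σ = π / sin (π * σ) := by
  have h_beta : mellin (fun t : ℝ => (1 + (t : ℂ))⁻¹) σ = betaIntegral σ (1 - σ) := by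
    rw [mellin, integral_Ioi_eq_integral_Ioo_div_one_sub, betaIntegral,
      intervalIntegral.integral_of_le zero_le_one, integral_Ioc_eq_integral_Ioo]
    refine setIntegral_congr_fun measurableSet_Ioo fun x ⟨hx₀, hx₁⟩ => ?_
    have hy : (0 : ℝ) < 1 - x := by linarith
    have hy' : (1 : ℂ) - x ≠ 0 := by exact_mod_cast hy.ne'
    rw [div_eq_mul_inv, ofReal_mul, mul_cpow_ofReal_nonneg hx₀.le (inv_nonneg.2 hy.le),
      ofReal_inv, inv_cpow _ _ (by rw [arg_ofReal_of_nonneg hy.le]; exact Real.pi_ne_zero.symm),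
      sub_sub_cancel_left, cpow_neg, ofReal_sub, ofReal_one]
    have h_pow : (1 - x : ℂ) ^ σ = (1 - x) ^ (σ - 1) * (1 - x) := by
      rw [cpow_sub _ _ hy', cpow_one, div_mul_cancel₀ _ hy']
    have h_pow_ne : (1 - x : ℂ) ^ (σ - 1) ≠ 0 := cpow_ne_zero_iff.2 (Or.inl hy')
    rw [h_pow, real_smul, smul_eq_mul]
    push_cast
    field_simp
    ring
  rw [h_beta, betaIntegral_eq_Gamma_mul_div _ _ hσ₀ (by simpa using hσ₁), add_sub_cancel,
    Gamma_one, div_one, Gamma_mul_Gamma_one_sub]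

theorem mellin_inv_ofReal_add (σ : ℂ) {r : ℝ} (hr : 0 < r) :
    mellin (fun t : ℝ => ((r : ℂ) + t)⁻¹) σ =
      (r : ℂ) ^ (σ - 1) * mellin (fun t : ℝ => (1 + (t : ℂ))⁻¹) σ := by
  have hr' : (r : ℂ) ≠ 0 := ofReal_ne_zero.2 hr.ne'
  have h_scale : (fun t : ℝ => ((r : ℂ) + t)⁻¹) =
      fun t : ℝ => (r : ℂ)⁻¹ • (1 + ((r⁻¹ * t : ℝ) : ℂ))⁻¹ := by
    ext t
    simp only [smul_eq_mul]
    push_cast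
    field_simp
  rw [h_scale, mellin_const_smul,
    mellin_comp_mul_left (fun u : ℝ => (1 + (u : ℂ))⁻¹) _ (inv_pos.2 hr), smul_eq_mul,
    smul_eq_mul, ← mul_assoc, ofReal_inv,
    inv_cpow _ _ (by rw [arg_ofReal_of_nonneg hr.le]; exact Real.pi_ne_zero.symm), cpow_neg,
    inv_inv, cpow_sub _ _ hr', cpow_one, inv_mul_eq_div]

theorem mellin_inv_add {σ : ℂ} (hσ : MellinConvergent (fun t : ℝ => (1 + (t : ℂ))⁻¹) σ)
    {s : ℂ} (hs : s ∈ slitPlane) :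
    mellin (fun t : ℝ => (s + t)⁻¹) σ =
      s ^ (σ - 1) * mellin (fun t : ℝ => (1 + (t : ℂ))⁻¹) σ := by
  have h_lhs : AnalyticOnNhd ℂ (fun s : ℂ => mellin (fun t : ℝ => (s + t)⁻¹) σ) slitPlane :=
    DifferentiableOn.analyticOnNhd (fun s hs => (differentiableAt_mellin_inv_add hσ hs)
      |>.differentiableWithinAt) isOpen_slitPlane
  have h_rhs : AnalyticOnNhd ℂ
      (fun s : ℂ => s ^ (σ - 1) * mellin (fun t : ℝ => (1 + (t : ℂ))⁻¹) σ) slitPlane :=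
    fun s hs => (analyticAt_id.cpow analyticAt_const hs).mul analyticAt_const
  have h_real : Tendsto ((↑) : ℝ → ℂ) (𝓝[>] 1) (𝓝[≠] 1) :=
    continuous_ofReal.continuousWithinAt.tendsto_nhdsWithin fun x hx =>
      by simpa using hx.out.ne'
  refine h_lhs.eqOn_of_preconnected_of_frequently_eq h_rhs
    (starConvex_one_slitPlane.isPathConnected one_mem_slitPlane).isConnected.isPreconnected
    one_mem_slitPlane (h_real.frequently ?_) hs
  exact (eventually_nhdsWithin_of_forall (s := Ioi 1) fun r hr =>
    mellin_inv_ofReal_add σ (zero_lt_one.trans hr)).frequently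

theorem integral_mul_div_rpow_div_add_sq (α c d : ℝ) (s : ℂ) :
    ∫ ω in Ioi (0 : ℝ), ((ω * (c / (d * (ω ^ 2) ^ α)) : ℝ) : ℂ) / (s + (ω : ℂ) ^ 2) =
      (c / d : ℝ) * mellin (fun t : ℝ => (s + t)⁻¹) (1 - α) / 2 := by
  have h_sq := mellin_comp_rpow (fun t : ℝ => (s + t)⁻¹) (2 * (1 - α)) 2
  rw [show 2 * (1 - (α : ℂ)) / ((2 : ℝ) : ℂ) = 1 - α by push_cast; ring, abs_two,
    Complex.real_smul, ofReal_inv, ofReal_ofNat, inv_mul_eq_div] at h_sq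
  rw [mul_div_assoc, ← h_sq, mellin, ← integral_const_mul]
  refine setIntegral_congr_fun measurableSet_Ioi fun ω (hω : 0 < ω) => ?_
  have h_pow : ω * (c / (d * (ω ^ 2) ^ α)) = c / d * ω ^ (2 * (1 - α) - 1) := by
    rw [← Real.rpow_natCast, ← Real.rpow_mul hω.le,
      show 2 * (1 - α) - 1 = 1 - ((2 : ℕ) : ℝ) * α by push_cast; ring,
      Real.rpow_sub hω, Real.rpow_one]
    ring
  rw [h_pow, ofReal_mul, ofReal_cpow hω.le, smul_eq_mul, Real.rpow_two]
  push_cast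
  ring

/-- **Bilateral frequency distributed identity.**
For `0 < α < 1` and `s ∈ ℂ \ (-∞, 0]`,
`1/s^α = 2 ∫_0^∞ ω μ_α(ω²)/(s+ω²) dω`, where `μ_α(ω) = sin(απ)/(π ω^α)` and `s^α` is the
principal complex power. -/
theorem bilateral_frequency_distributed_identity
    (α : ℝ) (hα0 : 0 < α) (hα1 : α < 1) (s : ℂ)
    (hs : ∀ x : ℝ, x ≤ 0 → s ≠ (x : ℂ)) :
    1 / s ^ (α : ℂ) =
      2 * ∫ ω in Set.Ioi (0 : ℝ),
        ((ω * (Real.sin (α * Real.pi) / (Real.pi * (ω ^ 2) ^ α)) : ℝ) : ℂ) /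
          (s + (ω : ℂ) ^ 2) := by
  have hs' : s ∈ slitPlane := by
    rw [mem_slitPlane_iff_not_le_zero, Complex.le_def]
    rintro ⟨hre, him⟩
    exact hs s.re hre (ext rfl (by simpa using him))
  have hσ₀ : 0 < (1 - (α : ℂ)).re := by simpa using hα1
  have hσ₁ : (1 - (α : ℂ)).re < 1 := by simpa using hα0
  have h_sin : Complex.sin (α * π) ≠ 0 := by
    rw [← ofReal_mul, ← ofReal_sin, ofReal_ne_zero]
    exact (Real.sin_pos_of_pos_of_lt_pi (by positivity) (by nlinarith [Real.pi_pos])).ne'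
  rw [integral_mul_div_rpow_div_add_sq,
    mellin_inv_add (mellinConvergent_inv_one_add hσ₀ hσ₁) hs', mellin_inv_one_add hσ₀ hσ₁,
    sub_sub_cancel_left, mul_sub, mul_one, sin_pi_sub, cpow_neg]
  push_cast
  field_simp
end

section
/- Let a be an integer, ω > 0 a real number, and u : ℤ → ℝ such that for every r with 0 < r < R the series ∑_{k=1}^∞ r^{k-1} |u(k+a)| converges, for some R > 0. Let z : ℤ → ℝ satisfy z(a) = 0 and z(k) − z(k−1) = −ω z(k) + u(k) for k ≥ a+1. Then for every complex s with |1−s| < min(R, 1+ω), both series ∑_{k=1}^∞ (1−s)^{k-1} z(k+a) and ∑_{k=1}^∞ (1−s)^{k-1} u(k+a) converge and ∑_{k=1}^∞ (1−s)^{k-1} z(k+a) = (1/(s+ω)) ∑_{k=1}^∞ (1−s)^{k-1} u(k+a). (The nabla-domain transfer function of the first-order frequency cell is 1/(s+ω).) -/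
/-!
Writing `c = (1 + ω)⁻¹`, the recurrence reads `z(k) = c (z(k-1) + u(k))`, so with `z(a) = 0` the
solution is the discrete convolution `z(a+k+1) = ∑_{j ≤ k} c^(k-j+1) u(a+j+1)`. The nabla Laplace
transform turns this convolution into a product (Cauchy product of absolutely convergent series),
and the transform of the kernel `c^(m+1)` is the geometric sum `c / (1 - c (1 - s)) = 1 / (s + ω)`.
Absolute convergence holds because `‖c (1 - s)‖ < 1` and `‖1 - s‖ < R`.
-/

open Finset

theorem eq_sum_range_pow_mul_of_eq_mul_add {R : Type*} [CommSemiring R] {c : R} {y v : ℕ → R}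
    (h0 : y 0 = c * v 0) (hsucc : ∀ k, y (k + 1) = c * (y k + v (k + 1))) (k : ℕ) :
    y k = ∑ j ∈ range (k + 1), c ^ (k - j + 1) * v j := by
  induction k with
  | zero => simpa using h0
  | succ k ih =>
    rw [hsucc, ih, sum_range_succ _ (k + 1), mul_add, mul_sum]
    congr 1
    · refine sum_congr rfl fun j hj => ?_
      rw [Nat.sub_add_comm (mem_range_succ_iff.mp hj)]
      ring
    · simp

section GeometricConvolution

variable {𝕜 : Type*} [NormedField 𝕜] (c x : 𝕜) (v : ℕ → 𝕜)

theorem pow_mul_sum_range_pow_mul (k : ℕ) :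
    x ^ k * ∑ j ∈ range (k + 1), c ^ (k - j + 1) * v j =
      ∑ j ∈ range (k + 1), x ^ j * v j * (c * (c * x) ^ (k - j)) := by
  rw [mul_sum]
  refine sum_congr rfl fun j hj => ?_
  obtain ⟨m, rfl⟩ := Nat.exists_eq_add_of_le (mem_range_succ_iff.mp hj)
  rw [Nat.add_sub_cancel_left]
  ring

variable {c x v}

theorem summable_norm_mul_geometric (hcx : ‖c * x‖ < 1) :
    Summable fun m : ℕ => ‖c * (c * x) ^ m‖ :=
  ((summable_norm_geometric_of_norm_lt_one hcx).mul_left ‖c‖).congr fun _ => (norm_mul c _).symm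

theorem summable_norm_pow_mul_sum_range_pow_mul (hcx : ‖c * x‖ < 1)
    (hv : Summable fun k => ‖x ^ k * v k‖) :
    Summable fun k => ‖x ^ k * ∑ j ∈ range (k + 1), c ^ (k - j + 1) * v j‖ := by
  simp only [pow_mul_sum_range_pow_mul]
  exact summable_norm_sum_mul_range_of_summable_norm (f := fun j => x ^ j * v j)
    (g := fun m => c * (c * x) ^ m) hv (summable_norm_mul_geometric hcx)

theorem tsum_pow_mul_sum_range_pow_mul [CompleteSpace 𝕜] (hcx : ‖c * x‖ < 1)
    (hv : Summable fun k => ‖x ^ k * v k‖) :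
    ∑' k, x ^ k * ∑ j ∈ range (k + 1), c ^ (k - j + 1) * v j =
      c / (1 - c * x) * ∑' k, x ^ k * v k := by
  simp only [pow_mul_sum_range_pow_mul]
  rw [← tsum_mul_tsum_eq_tsum_sum_range_of_summable_norm (f := fun j => x ^ j * v j)
    (g := fun m => c * (c * x) ^ m) hv (summable_norm_mul_geometric hcx), tsum_mul_left,
    tsum_geometric_of_norm_lt_one hcx, div_eq_mul_inv, mul_comm]

end GeometricConvolution

theorem summable_norm_pow_mul_ofReal_of_norm_le {u : ℕ → ℝ} {r : ℝ} {x : ℂ}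
    (hu : Summable fun k => r ^ k * |u k|) (hx : ‖x‖ ≤ r) :
    Summable fun k => ‖x ^ k * (u k : ℂ)‖ := by
  refine hu.of_nonneg_of_le (fun _ => norm_nonneg _) fun k => ?_
  rw [norm_mul, norm_pow, Complex.norm_real, Real.norm_eq_abs]
  gcongr

theorem frequency_cell_eq_inv_mul_add {a : ℤ} {ω : ℝ} {u z : ℤ → ℝ} (hω : 1 + ω ≠ 0)
    (hz : ∀ k : ℤ, a + 1 ≤ k → z k - z (k - 1) = -ω * z k + u k) (k : ℕ) :
    z (a + k + 1) = (1 + ω)⁻¹ * (z (a + k) + u (a + k + 1)) := by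
  have h := hz (a + k + 1) (by omega)
  rw [add_sub_cancel_right] at h
  rw [eq_inv_mul_iff_mul_eq₀ hω]
  linarith

theorem frequency_cell_transfer_function_general
    (a : ℤ) (ω : ℝ) (R : ℝ) (u z : ℤ → ℝ)
    (hu : ∀ r : ℝ, 0 < r → r < R →
      Summable (fun k : ℕ => r ^ k * |u (a + (k : ℤ) + 1)|))
    (hza : z a = 0)
    (hz : ∀ k : ℤ, a + 1 ≤ k → z k - z (k - 1) = -ω * z k + u k) :
    ∀ s : ℂ, ‖1 - s‖ < min R (1 + ω) →
      Summable (fun k : ℕ => (1 - s) ^ k * (z (a + (k : ℤ) + 1) : ℂ)) ∧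
      Summable (fun k : ℕ => (1 - s) ^ k * (u (a + (k : ℤ) + 1) : ℂ)) ∧
      (∑' k : ℕ, (1 - s) ^ k * (z (a + (k : ℤ) + 1) : ℂ)) =
        (1 / (s + (ω : ℂ))) * ∑' k : ℕ, (1 - s) ^ k * (u (a + (k : ℤ) + 1) : ℂ) := by
  intro s hs
  obtain ⟨hsR, hsω⟩ := lt_min_iff.mp hs
  have hω : 0 < 1 + ω := (norm_nonneg _).trans_lt hsω
  obtain ⟨r, hsr, hrR⟩ := exists_between hsR
  have hU := summable_norm_pow_mul_ofReal_of_norm_le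
    (hu r ((norm_nonneg _).trans_lt hsr) hrR) hsr.le
  obtain ⟨c, hc_def⟩ : ∃ c : ℂ, c = ((1 + ω)⁻¹ : ℝ) := ⟨_, rfl⟩
  have hc : c * (1 + ω) = 1 := by
    rw [hc_def, Complex.ofReal_inv, Complex.ofReal_add, Complex.ofReal_one]
    exact inv_mul_cancel₀ (by exact_mod_cast hω.ne')
  have hcx : ‖c * (1 - s)‖ < 1 := by
    rw [hc_def, norm_mul, Complex.norm_real, Real.norm_eq_abs, abs_inv, abs_of_pos hω,
      inv_mul_lt_one₀ hω]
    exact hsω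
  have hstep (k : ℕ) : (z (a + k + 1) : ℂ) = c * (z (a + k) + u (a + k + 1)) := by
    rw [hc_def]
    exact_mod_cast frequency_cell_eq_inv_mul_add hω.ne' hz k
  have hzc (k : ℕ) : (z (a + k + 1) : ℂ) = ∑ j ∈ range (k + 1), c ^ (k - j + 1) * u (a + j + 1) :=
    eq_sum_range_pow_mul_of_eq_mul_add (y := fun k => (z (a + k + 1) : ℂ))
      (by simpa [hza] using hstep 0) (fun k => by simpa [add_assoc] using hstep (k + 1)) k
  simp only [hzc]
  refine ⟨(summable_norm_pow_mul_sum_range_pow_mul hcx hU).of_norm, hU.of_norm, ?_⟩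
  rw [tsum_pow_mul_sum_range_pow_mul hcx hU]
  have hden : 1 - c * (1 - s) = c * (s + ω) := by linear_combination -hc
  rw [hden, div_mul_cancel_left₀ (left_ne_zero_of_mul_eq_one hc), one_div]

/-- **Nabla-domain transfer function of the first-order frequency cell is `1/(s+ω)`.**
If `z(a) = 0` and `z(k) − z(k−1) = −ω z(k) + u(k)` for `k ≥ a+1`, then for every complex
`s` with `|1−s| < min(R, 1+ω)` both nabla Laplace series converge and
`Z(s) = (1/(s+ω)) U(s)`. -/
theorem frequency_cell_transfer_function
    (a : ℤ) (ω : ℝ) (hω : 0 < ω) (R : ℝ) (hR : 0 < R) (u z : ℤ → ℝ)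
    (hu : ∀ r : ℝ, 0 < r → r < R →
      Summable (fun k : ℕ => r ^ k * |u (a + (k : ℤ) + 1)|))
    (hza : z a = 0)
    (hz : ∀ k : ℤ, a + 1 ≤ k → z k - z (k - 1) = -ω * z k + u k) :
    ∀ s : ℂ, ‖1 - s‖ < min R (1 + ω) →
      Summable (fun k : ℕ => (1 - s) ^ k * (z (a + (k : ℤ) + 1) : ℂ)) ∧
      Summable (fun k : ℕ => (1 - s) ^ k * (u (a + (k : ℤ) + 1) : ℂ)) ∧
      (∑' k : ℕ, (1 - s) ^ k * (z (a + (k : ℤ) + 1) : ℂ)) =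
        (1 / (s + (ω : ℂ))) * ∑' k : ℕ, (1 - s) ^ k * (u (a + (k : ℤ) + 1) : ℂ) :=
  frequency_cell_transfer_function_general a ω R u z hu hza hz
end

section
/- Let a be an integer and f : ℤ → ℝ be such that for every r with 0 < r < R the series ∑_{k=1}^∞ r^{k-1} |f(k+a)| converges, for some R > 0. Then for every complex s with |1−s| < min(R, 1), the series ∑_{k=1}^∞ (1−s)^{k-1} (f(k+a) − f(k+a−1)) converges and equals s · (∑_{k=1}^∞ (1−s)^{k-1} f(k+a)) − f(a). (The nabla Laplace transform of the backward difference ∇f is s F(s) − f(a).) -/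
/-!
Write `z = 1 - s` and `v n = f (a + n)`. The growth hypothesis makes `∑ zᵏ v (k+1)` converge
absolutely for `‖z‖ < R`, hence also its shift `∑ zᵏ v k = v 0 + z ∑ zᵏ v (k+1)`. Subtracting the two
series gives `∑ zᵏ (v (k+1) - v k) = (1 - z) ∑ zᵏ v (k+1) - v 0`, which is `s F(s) - f(a)`.
-/

theorem summable_pow_mul_ofReal_of_forall_lt {u : ℕ → ℝ} {R : ℝ}
    (hu : ∀ r : ℝ, 0 < r → r < R → Summable fun k : ℕ => r ^ k * |u k|)
    {z : ℂ} (hz : ‖z‖ < R) :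
    Summable fun k : ℕ => z ^ k * (u k : ℂ) := by
  obtain ⟨r, hzr, hrR⟩ := exists_between hz
  refine Summable.of_norm_bounded (hu r ((norm_nonneg z).trans_lt hzr) hrR) fun k => ?_
  rw [norm_mul, norm_pow, Complex.norm_real, Real.norm_eq_abs]
  gcongr

section Shift

variable {α : Type*} [Ring α] [TopologicalSpace α] [IsTopologicalRing α]

theorem summable_pow_mul_of_summable_pow_mul_succ {z : α} {v : ℕ → α}
    (hv : Summable fun k : ℕ => z ^ k * v (k + 1)) :
    Summable fun k : ℕ => z ^ k * v k := by
  rw [← summable_nat_add_iff 1]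
  simpa only [pow_succ', mul_assoc] using hv.mul_left z

theorem tsum_pow_mul_eq_add_mul_tsum_succ [T2Space α] {z : α} {v : ℕ → α}
    (hv : Summable fun k : ℕ => z ^ k * v (k + 1)) :
    ∑' k : ℕ, z ^ k * v k = v 0 + z * ∑' k : ℕ, z ^ k * v (k + 1) := by
  rw [(summable_pow_mul_of_summable_pow_mul_succ hv).tsum_eq_zero_add, ← hv.tsum_mul_left]
  simp only [pow_zero, one_mul, pow_succ', mul_assoc]

theorem hasSum_pow_mul_succ_sub [T2Space α] {z : α} {v : ℕ → α}
    (hv : Summable fun k : ℕ => z ^ k * v (k + 1)) :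
    HasSum (fun k : ℕ => z ^ k * (v (k + 1) - v k))
      ((1 - z) * ∑' k : ℕ, z ^ k * v (k + 1) - v 0) := by
  have hdiff := hv.hasSum.sub (summable_pow_mul_of_summable_pow_mul_succ hv).hasSum
  rw [tsum_pow_mul_eq_add_mul_tsum_succ hv] at hdiff
  simp only [← mul_sub] at hdiff
  rwa [sub_mul, one_mul, sub_sub, add_comm (z * _)]

end Shift

theorem nabla_laplace_of_backward_difference_general
    (a : ℤ) (f : ℤ → ℝ) (R : ℝ)
    (hf : ∀ r : ℝ, 0 < r → r < R →
      Summable (fun k : ℕ => r ^ k * |f (a + (k : ℤ) + 1)|)) :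
    ∀ s : ℂ, ‖1 - s‖ < min R 1 →
      Summable (fun k : ℕ =>
        (1 - s) ^ k * ((f (a + (k : ℤ) + 1) - f (a + (k : ℤ))) : ℂ)) ∧
      (∑' k : ℕ, (1 - s) ^ k * ((f (a + (k : ℤ) + 1) - f (a + (k : ℤ))) : ℂ)) =
        s * (∑' k : ℕ, (1 - s) ^ k * (f (a + (k : ℤ) + 1) : ℂ)) - (f a : ℂ) := by
  intro s hs
  have hF : Summable fun k : ℕ => (1 - s) ^ k * (f (a + ((k + 1 : ℕ) : ℤ)) : ℂ) := by
    simpa only [Nat.cast_succ, ← add_assoc] using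
      summable_pow_mul_ofReal_of_forall_lt hf (hs.trans_le (min_le_left R 1))
  have hdiff := hasSum_pow_mul_succ_sub (v := fun n : ℕ => (f (a + n) : ℂ)) hF
  simp only [Nat.cast_succ, ← add_assoc, sub_sub_cancel, Nat.cast_zero, add_zero] at hdiff
  exact ⟨hdiff.summable, hdiff.tsum_eq⟩

/-- **The nabla Laplace transform of the backward difference `∇f` is `s F(s) − f(a)`.**
For every complex `s` with `|1−s| < min(R, 1)` the nabla Laplace series of
`∇f(k) = f(k) − f(k−1)` converges and equals `s F(s) − f(a)`, where
`F(s) = ∑_{k=1}^∞ (1−s)^{k-1} f(k+a)` is the nabla Laplace transform of `f` about `a`. -/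
theorem nabla_laplace_of_backward_difference
    (a : ℤ) (f : ℤ → ℝ) (R : ℝ) (hR : 0 < R)
    (hf : ∀ r : ℝ, 0 < r → r < R →
      Summable (fun k : ℕ => r ^ k * |f (a + (k : ℤ) + 1)|)) :
    ∀ s : ℂ, ‖1 - s‖ < min R 1 →
      Summable (fun k : ℕ =>
        (1 - s) ^ k * ((f (a + (k : ℤ) + 1) - f (a + (k : ℤ))) : ℂ)) ∧
      (∑' k : ℕ, (1 - s) ^ k * ((f (a + (k : ℤ) + 1) - f (a + (k : ℤ))) : ℂ)) =
        s * (∑' k : ℕ, (1 - s) ^ k * (f (a + (k : ℤ) + 1) : ℂ)) - (f a : ℂ) :=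
  nabla_laplace_of_backward_difference_general a f R hf
end
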